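/- Let F be the family of split-state tampering functions on {0,1}^n: each f ∈ F interprets its input as a pair (x_1, x_2) with x_1 ∈ {0,1}^{⌈n/2⌉} and x_2 ∈ {0,1}^{⌊n/2⌋} and outputs (f_1(x_1), f_2(x_2)) for arbitrary functions f_1, f_2 on the respective input lengths. For every constant γ > 0 there exist a constant ε_0 > 0 and n_0 such that for all n ≥ n_0: any coding scheme with block length n that is non-malleable with respect to F with error ε ≤ ε_0 has rate at most 1/2 + γ. -/

import Mathlib

open Finset

/-- Bit strings of length `n`, i.e. `{0,1}^n`. -/
abbrev Word (n : ℕ) := Fin n → Bool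

/-- Messages of length `k`, i.e. `{0,1}^k`. -/
abbrev Msg (k : ℕ) := Fin k → Bool

/-- Values in `{0,1}^k ∪ {⊥, same}`: `none` = `same`, `some none` = `⊥`,
`some (some s)` = the message `s`. -/
abbrev NMVal (k : ℕ) := Option (Option (Msg k))

/-- `copy x s = s` if `x = same`, and `copy x s = x` otherwise. -/
def copyFn {k : ℕ} (x : NMVal k) (s : Msg k) : Option (Msg k) := x.getD (some s)

/-- Statistical (total variation) distance between two mass functions on a finite set. -/
noncomputable def statDist {α : Type*} [Fintype α] (P Q : α → ℝ) : ℝ :=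
  (∑ x, |P x - Q x|) / 2

/-- A probability mass function on a finite set. -/
def IsDist {α : Type*} [Fintype α] (D : α → ℝ) : Prop :=
  (∀ a, 0 ≤ D a) ∧ ∑ a, D a = 1

/-- A coding scheme with block length `n` and message length `k`: a randomized
encoder `enc` (given as the probability mass function of `Enc(s)`) and a
deterministic decoder `dec` (`none` = `⊥`) such that `Dec(Enc(s)) = s` always. -/
structure CodingScheme (n k : ℕ) where
  enc : Msg k → Word n → ℝ
  dec : Word n → Option (Msg k)
  enc_nonneg : ∀ s x, 0 ≤ enc s x
  enc_sum : ∀ s, ∑ x, enc s x = 1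
  dec_enc : ∀ s x, 0 < enc s x → dec x = some s

/-- The distribution of `Dec(f(Enc(s)))`. -/
noncomputable def decDist {n k : ℕ} (C : CodingScheme n k)
    (f : Word n → Word n) (s : Msg k) : Option (Msg k) → ℝ :=
  fun y => ∑ x, if C.dec (f x) = y then C.enc s x else 0

/-- The distribution of `copy(S', s)` for `S' ~ D`. -/
noncomputable def copyDist {k : ℕ} (D : NMVal k → ℝ) (s : Msg k) : Option (Msg k) → ℝ :=
  fun y => ∑ v, if copyFn v s = y then D v else 0

/-- The distribution `D_{f,s}` of the random variable that equals `same` if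
`f(Enc(s)) = Enc(s)` and `Dec(f(Enc(s)))` otherwise. -/
noncomputable def tamperDist {n k : ℕ} (C : CodingScheme n k)
    (f : Word n → Word n) (s : Msg k) : NMVal k → ℝ :=
  fun v => ∑ x, if (if f x = x then (none : NMVal k) else some (C.dec (f x))) = v
    then C.enc s x else 0

/-- Non-malleability of a coding scheme w.r.t. a family `F` with error `ε`. -/
def NonMalleable {n k : ℕ} (C : CodingScheme n k)
    (F : Set (Word n → Word n)) (ε : ℝ) : Prop :=
  ∀ f ∈ F, ∃ D : NMVal k → ℝ, IsDist D ∧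
    ∀ s : Msg k, statDist (decDist C f s) (copyDist D s) ≤ ε

/-- Strong non-malleability of a coding scheme w.r.t. a family `F` with error `ε`. -/
def StronglyNonMalleable {n k : ℕ} (C : CodingScheme n k)
    (F : Set (Word n → Word n)) (ε : ℝ) : Prop :=
  ∀ f ∈ F, ∀ s₁ s₂ : Msg k, s₁ ≠ s₂ →
    statDist (tamperDist C f s₁) (tamperDist C f s₂) ≤ ε

/-- Hamming weight of a word. -/
def hammingWt {n : ℕ} (x : Word n) : ℕ := (univ.filter (fun i => x i = true)).card

/-- The coding scheme has relative distance `δ`: any offset of a codeword by a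
nonzero `Δ` of Hamming weight at most `δn` is rejected by the decoder. -/
def HasRelDist {n k : ℕ} (C : CodingScheme n k) (δ : ℝ) : Prop :=
  ∀ s x, 0 < C.enc s x → ∀ Δ : Word n, Δ ≠ (fun _ => false) →
    (hammingWt Δ : ℝ) ≤ δ * n → C.dec (fun i => xor (x i) (Δ i)) = none

/-- The binary entropy function (logs base 2). -/
noncomputable def binEnt (δ : ℝ) : ℝ :=
  -(δ * Real.logb 2 δ) - (1 - δ) * Real.logb 2 (1 - δ)

/-- The family of split-state tampering functions on `{0,1}^n`: the first
`⌈n/2⌉ = (n+1)/2` bits of the output depend only on the first `⌈n/2⌉` bits of the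
input, and the remaining `⌊n/2⌋` bits of the output depend only on the remaining
`⌊n/2⌋` bits of the input. -/
def SplitState (n : ℕ) : Set (Word n → Word n) :=
  {f | (∀ x y : Word n, (∀ i : Fin n, (i : ℕ) < (n + 1) / 2 → x i = y i) →
          ∀ i : Fin n, (i : ℕ) < (n + 1) / 2 → f x i = f y i) ∧
       (∀ x y : Word n, (∀ i : Fin n, (n + 1) / 2 ≤ (i : ℕ) → x i = y i) →
          ∀ i : Fin n, (n + 1) / 2 ≤ (i : ℕ) → f x i = f y i)}

/- Two codewords of different messages that share their right half are found by pigeonhole as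
soon as `k > ⌊n/2⌋`. For each message `t`, the split-state attack maps a word to the first of
them when its left half is the left half of some codeword of `t`, and to the second otherwise.
Under `Enc(t)` this decodes to the first message with certainty, so non-malleability forces
every fixed `Enc(s)` to have its left half in the left support of almost every `t`. But a
left half lies in the left support of at most `2^⌊n/2⌋` messages, since the supports of distinct
messages are disjoint; hence `2^k ≲ 2^⌊n/2⌋`. -/

section Halves

variable {n : ℕ}

def AgreeBelow (h : ℕ) (x y : Word n) : Prop :=
  ∀ i : Fin n, (i : ℕ) < h → x i = y i

def AgreeFrom (h : ℕ) (x y : Word n) : Prop :=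
  ∀ i : Fin n, h ≤ (i : ℕ) → x i = y i

theorem AgreeBelow.symm {h : ℕ} {x y : Word n} (hxy : AgreeBelow h x y) : AgreeBelow h y x :=
  fun i hi => (hxy i hi).symm

theorem AgreeBelow.trans {h : ℕ} {x y z : Word n} (hxy : AgreeBelow h x y)
    (hyz : AgreeBelow h y z) : AgreeBelow h x z :=
  fun i hi => (hxy i hi).trans (hyz i hi)

def rightPart (h : ℕ) (x : Word n) : Fin (n - h) → Bool :=
  fun j => x ⟨h + j, by omega⟩

theorem agreeFrom_of_rightPart_eq {h : ℕ} {x y : Word n} (hxy : rightPart h x = rightPart h y) :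
    AgreeFrom h x y := by
  intro i hi
  have := congrFun hxy ⟨i - h, by omega⟩
  simpa only [rightPart, Nat.add_sub_cancel' hi] using this

theorem eq_of_agreeBelow_of_rightPart_eq {h : ℕ} {x y : Word n} (hl : AgreeBelow h x y)
    (hr : rightPart h x = rightPart h y) : x = y := by
  funext i
  by_cases hi : (i : ℕ) < h
  · exact hl i hi
  · exact agreeFrom_of_rightPart_eq hr i (not_lt.mp hi)

end Halves

theorem ite_mem_splitState {n : ℕ} (P : Word n → Prop) [DecidablePred P]
    (hP : ∀ x y, AgreeBelow ((n + 1) / 2) x y → (P x ↔ P y)) {c₀ c₁ : Word n}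
    (hc : AgreeFrom ((n + 1) / 2) c₀ c₁) :
    (fun x => if P x then c₀ else c₁) ∈ SplitState n := by
  refine ⟨fun x y hxy i _ => by simp only [hP x y hxy], fun x y _ i hi => ?_⟩
  dsimp only
  split_ifs <;> simp only [hc i hi]

theorem abs_sub_le_two_mul_statDist {α : Type*} [Fintype α] (P Q : α → ℝ) (a : α) :
    |P a - Q a| ≤ 2 * statDist P Q := by
  have := Finset.single_le_sum (fun x _ => abs_nonneg (P x - Q x)) (Finset.mem_univ a)
  rw [statDist]
  linarith

theorem copyDist_some_of_ne {k : ℕ} (D : NMVal k → ℝ) {s u : Msg k} (hsu : s ≠ u) :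
    copyDist D s (some u) = D (some (some u)) := by
  rw [copyDist, Finset.sum_eq_single (some (some u))]
  · simp [copyFn]
  · rintro (_ | w) _ hw
    · simp [copyFn, hsu]
    · simp only [copyFn, Option.getD_some]
      exact if_neg fun h => hw (congrArg some h)
  · simp

theorem sum_sum_ite_le_mul_sum {ι α : Type*} [Fintype α] (T : Finset ι) (P : ι → α → Prop)
    [∀ t x, Decidable (P t x)] {p : α → ℝ} (hp : ∀ x, 0 ≤ p x) {N : ℕ}
    (hN : ∀ x, (T.filter (P · x)).card ≤ N) :
    ∑ t ∈ T, ∑ x, (if P t x then p x else 0) ≤ N * ∑ x, p x := by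
  rw [Finset.sum_comm, Finset.mul_sum]
  refine Finset.sum_le_sum fun x _ => ?_
  rw [← Finset.sum_filter, Finset.sum_const, nsmul_eq_mul]
  exact mul_le_mul_of_nonneg_right (by exact_mod_cast hN x) (hp x)

namespace CodingScheme

variable {n k : ℕ} (C : CodingScheme n k)

open Classical in
noncomputable def encProb (s : Msg k) (P : Word n → Prop) : ℝ :=
  ∑ x, if P x then C.enc s x else 0

def InLeftSupport (h : ℕ) (t : Msg k) (x : Word n) : Prop :=
  ∃ y, 0 < C.enc t y ∧ AgreeBelow h x y

theorem exists_enc_pos (s : Msg k) : ∃ x, 0 < C.enc s x := by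
  obtain ⟨x, -, hx⟩ := Finset.exists_lt_of_sum_lt (f := fun _ => 0) (g := C.enc s)
    (by rw [Finset.sum_const_zero, C.enc_sum]; exact one_pos)
  exact ⟨x, hx⟩

theorem inLeftSupport_congr {h : ℕ} {t : Msg k} {x x' : Word n} (hx : AgreeBelow h x x') :
    C.InLeftSupport h t x ↔ C.InLeftSupport h t x' :=
  ⟨fun ⟨y, hy, hxy⟩ => ⟨y, hy, hx.symm.trans hxy⟩, fun ⟨y, hy, hxy⟩ => ⟨y, hy, hx.trans hxy⟩⟩

theorem encProb_inLeftSupport_self (h : ℕ) (t : Msg k) :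
    C.encProb t (C.InLeftSupport h t) = 1 := by
  rw [encProb, ← C.enc_sum t]
  refine Finset.sum_congr rfl fun x _ => ?_
  by_cases hx : C.InLeftSupport h t x
  · rw [if_pos hx]
  · rw [if_neg hx]
    by_contra hne
    exact hx ⟨x, (C.enc_nonneg t x).lt_of_ne hne, fun _ _ => rfl⟩

open Classical in
theorem card_filter_inLeftSupport_le (T : Finset (Msg k)) (h : ℕ) (x : Word n) :
    (T.filter (C.InLeftSupport h · x)).card ≤ 2 ^ (n - h) := by
  have hwit : ∀ t ∈ T.filter (C.InLeftSupport h · x), ∃ y, 0 < C.enc t y ∧ AgreeBelow h x y :=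
    fun t ht => (Finset.mem_filter.mp ht).2
  choose! y hy using hwit
  calc _ ≤ (Finset.univ : Finset (Fin (n - h) → Bool)).card := by
        refine Finset.card_le_card_of_injOn (fun t => rightPart h (y t))
          (fun _ _ => Finset.mem_univ _) fun t₁ h₁ t₂ h₂ heq => ?_
        -- the witnesses share their left half with `x`, and the supports of messages are disjoint
        have hy₁₂ : y t₁ = y t₂ :=
          eq_of_agreeBelow_of_rightPart_eq ((hy t₁ h₁).2.symm.trans (hy t₂ h₂).2) heq
        have hdec := C.dec_enc t₁ _ (hy t₁ h₁).1
        rw [hy₁₂, C.dec_enc t₂ _ (hy t₂ h₂).1] at hdec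
        exact (Option.some_inj.mp hdec).symm
    _ = 2 ^ (n - h) := by simp

open Classical in
theorem sum_encProb_inLeftSupport_le (T : Finset (Msg k)) (h : ℕ) (s : Msg k) :
    ∑ t ∈ T, C.encProb s (C.InLeftSupport h t) ≤ 2 ^ (n - h) := by
  have := sum_sum_ite_le_mul_sum T (C.InLeftSupport h) (C.enc_nonneg s)
    (C.card_filter_inLeftSupport_le T h)
  rwa [C.enc_sum, mul_one, Nat.cast_pow, Nat.cast_two] at this

theorem decDist_ite_some (P : Word n → Prop) [DecidablePred P] {c₀ c₁ : Word n} {s₀ : Msg k}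
    (h₀ : C.dec c₀ = some s₀) (h₁ : C.dec c₁ ≠ some s₀) (s : Msg k) :
    decDist C (fun x => if P x then c₀ else c₁) s (some s₀) = C.encProb s P := by
  unfold decDist encProb
  refine Finset.sum_congr rfl fun x _ => ?_
  by_cases hx : P x <;> simp [hx, h₀, h₁]

theorem exists_ne_agreeFrom {h : ℕ} (hk : n - h < k) :
    ∃ s₀ s₁ c₀ c₁, s₀ ≠ s₁ ∧ 0 < C.enc s₀ c₀ ∧ 0 < C.enc s₁ c₁ ∧ AgreeFrom h c₀ c₁ := by
  choose c hc using C.exists_enc_pos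
  obtain ⟨s₀, s₁, hne, heq⟩ := Fintype.exists_ne_map_eq_of_card_lt (fun s => rightPart h (c s))
    (by simpa using Nat.pow_lt_pow_right one_lt_two hk)
  exact ⟨s₀, s₁, c s₀, c s₁, hne, hc s₀, hc s₁, agreeFrom_of_rightPart_eq heq⟩

end CodingScheme

namespace NonMalleable

variable {n k : ℕ} {C : CodingScheme n k} {ε : ℝ}

/-- Both distributions are `2ε`-close to `copy(S', ·)`, which puts the same mass
`D_f(u)` on `u` for every message other than `u`. -/
theorem abs_decDist_sub_le {F : Set (Word n → Word n)} (hC : NonMalleable C F ε)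
    {f : Word n → Word n} (hf : f ∈ F) {s s' u : Msg k} (hs : s ≠ u) (hs' : s' ≠ u) :
    |decDist C f s (some u) - decDist C f s' (some u)| ≤ 4 * ε := by
  obtain ⟨D, -, hD⟩ := hC f hf
  have h := abs_sub_le_two_mul_statDist (decDist C f s) (copyDist D s) (some u)
  have h' := abs_sub_le_two_mul_statDist (decDist C f s') (copyDist D s') (some u)
  rw [copyDist_some_of_ne D hs] at h
  rw [copyDist_some_of_ne D hs'] at h'
  rw [abs_le] at *
  constructor <;> linarith [hD s, hD s']

theorem one_sub_le_encProb_inLeftSupport (hC : NonMalleable C (SplitState n) ε)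
    {s₀ s₁ : Msg k} {c₀ c₁ : Word n} (h₀ : 0 < C.enc s₀ c₀) (h₁ : 0 < C.enc s₁ c₁) (hne : s₀ ≠ s₁)
    (hc : AgreeFrom ((n + 1) / 2) c₀ c₁) {s t : Msg k} (hs : s ≠ s₀) (ht : t ≠ s₀) :
    1 - 4 * ε ≤ C.encProb s (C.InLeftSupport ((n + 1) / 2) t) := by
  classical
  have hf := ite_mem_splitState (C.InLeftSupport ((n + 1) / 2) t)
    (fun _ _ hxy => C.inLeftSupport_congr hxy) hc
  have hd₀ := C.dec_enc _ _ h₀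
  have hd₁ : C.dec c₁ ≠ some s₀ := by
    rw [C.dec_enc _ _ h₁]
    exact fun h => hne (Option.some_inj.mp h).symm
  have := hC.abs_decDist_sub_le hf ht hs
  rw [C.decDist_ite_some _ hd₀ hd₁, C.decDist_ite_some _ hd₀ hd₁,
    C.encProb_inLeftSupport_self] at this
  linarith [(abs_le.mp this).2]

theorem msgLength_le (hC : NonMalleable C (SplitState n) ε) (hε : ε ≤ 1 / 8) :
    k ≤ n / 2 + 1 := by
  by_contra! hk
  obtain ⟨s₀, s₁, c₀, c₁, hne, h₀, h₁, hc⟩ := C.exists_ne_agreeFrom (h := (n + 1) / 2) (by omega)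
  have hlower : ((Finset.univ.erase s₀).card : ℝ) * (1 - 4 * ε) ≤
      ∑ t ∈ Finset.univ.erase s₀, C.encProb s₁ (C.InLeftSupport ((n + 1) / 2) t) := by
    rw [← nsmul_eq_mul]
    exact Finset.card_nsmul_le_sum _ _ _ fun t ht =>
      hC.one_sub_le_encProb_inLeftSupport h₀ h₁ hne hc hne.symm (Finset.ne_of_mem_erase ht)
  have hupper := C.sum_encProb_inLeftSupport_le (Finset.univ.erase s₀) ((n + 1) / 2) s₁
  have hcard : ((Finset.univ.erase s₀).card : ℝ) = 2 ^ k - 1 := by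
    simp [Finset.card_erase_of_mem]
  have hhalf : n - (n + 1) / 2 = n / 2 := by omega
  have hpow : (2 : ℝ) ^ (n / 2 + 2) ≤ 2 ^ k := pow_le_pow_right₀ one_le_two hk
  rw [hcard] at hlower
  rw [hhalf] at hupper
  rw [pow_add] at hpow
  nlinarith [one_le_pow₀ (one_le_two : (1 : ℝ) ≤ 2) (n := n / 2)]

end NonMalleable

/-- For every constant `γ > 0` there exist `ε₀ > 0` and `n₀` such
that for all `n ≥ n₀`: any coding scheme with block length `n` that is non-malleable
w.r.t. the split-state family with error `ε ≤ ε₀` has rate at most `1/2 + γ`. -/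
theorem split_state_capacity_upper_bound :
    ∀ γ : ℝ, 0 < γ →
    ∃ ε₀ : ℝ, 0 < ε₀ ∧ ∃ n₀ : ℕ, ∀ n : ℕ, n₀ ≤ n →
    ∀ k : ℕ, ∀ Cs : CodingScheme n k, ∀ ε : ℝ, 0 ≤ ε → ε ≤ ε₀ →
      NonMalleable Cs (SplitState n) ε →
      (k : ℝ) / (n : ℝ) ≤ 1/2 + γ := by
  intro γ hγ
  refine ⟨1 / 8, by norm_num, ⌈1 / γ⌉₊, fun n hn k Cs ε _ hε hCs => ?_⟩
  rcases n.eq_zero_or_pos with rfl | hn₀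
  · simp only [CharP.cast_eq_zero, div_zero]
    positivity
  have hk : (k : ℝ) ≤ n / 2 + 1 := by
    have hnat : (k : ℝ) ≤ (n / 2 : ℕ) + 1 := by exact_mod_cast hCs.msgLength_le hε
    linarith [(Nat.cast_div_le : ((n / 2 : ℕ) : ℝ) ≤ n / 2)]
  have hγn : 1 ≤ γ * n := by
    have hn' := Nat.ceil_le.mp hn
    rwa [div_le_iff₀ hγ, mul_comm] at hn'
  rw [div_le_iff₀ (by exact_mod_cast hn₀)]
  linarith
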